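/- For every n ≥ 1, the least k such that the prefix of the Thue-Morse word of length 4n can be written as a concatenation of k nonempty palindromes each of whose lengths is divisible by 4 (a 0-decomposition) is equal to PPL_t(n); in particular, PPL_t(4n) ≤ PPL_t(n). -/
import Mathlib


/-- The Thue–Morse word: `tm n` is the number of ones (sum of binary digits)
in the binary expansion of `n`, taken mod 2. -/
def tm (n : ℕ) : ℕ := (Nat.digits 2 n).sum % 2

/-- `ps` is a factorization of the finite word `w` into nonempty palindromes. -/
def IsPalDecomp (w : List ℕ) (ps : List (List ℕ)) : Prop :=
  ps.flatten = w ∧ ∀ p ∈ ps, p ≠ [] ∧ p.Palindrome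

/-- The palindromic length of a finite word: the least number of nonempty
palindromes whose concatenation is the word (0 for the empty word). -/
noncomputable def palLen (w : List ℕ) : ℕ :=
  sInf {k | ∃ ps, ps.length = k ∧ IsPalDecomp w ps}

/-- `pplTM n` is the palindromic length of the prefix of length `n`
of the Thue–Morse word. -/
noncomputable def pplTM (n : ℕ) : ℕ := palLen ((List.range n).map tm)

/-- `pplTM0 n` is the least number of nonempty palindromes, each of length
divisible by 4, whose concatenation is the prefix of length `n` of the
Thue–Morse word (the minimal size of a 0-decomposition). -/
noncomputable def pplTM0 (n : ℕ) : ℕ :=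
  sInf {k | ∃ ps : List (List ℕ), ps.length = k ∧
    ps.flatten = (List.range n).map tm ∧
    ∀ p ∈ ps, p ≠ [] ∧ p.Palindrome ∧ p.length % 4 = 0}

/-! ### Auxiliary material -/

/-- The Thue–Morse morphism on a letter (mod 2): `0 ↦ 0110`, `1 ↦ 1001`. -/
def sig (a : ℕ) : List ℕ := [a % 2, (a + 1) % 2, (a + 1) % 2, a % 2]

/-- The Thue–Morse morphism on words. -/
def sigW (w : List ℕ) : List ℕ := (w.map sig).flatten

lemma tm_lt_two (n : ℕ) : tm n < 2 := Nat.mod_lt _ (by norm_num)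

lemma tm_two_mul (k : ℕ) : tm (2 * k) = tm k := by
  rcases Nat.eq_zero_or_pos k with h | h
  · subst h; rfl
  · unfold tm
    rw [Nat.digits_def' (by norm_num : 1 < 2) (by omega : 0 < 2 * k)]
    have h1 : 2 * k % 2 = 0 := by omega
    have h2 : 2 * k / 2 = k := by omega
    simp [h1, h2]

lemma tm_two_mul_add_one (k : ℕ) : tm (2 * k + 1) = (tm k + 1) % 2 := by
  unfold tm
  rw [Nat.digits_def' (by norm_num : 1 < 2) (by omega : 0 < 2 * k + 1)]
  have h1 : (2 * k + 1) % 2 = 1 := by omega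
  have h2 : (2 * k + 1) / 2 = k := by omega
  rw [h1, h2]
  simp
  omega

lemma sigW_nil : sigW [] = [] := rfl

lemma sigW_cons (a : ℕ) (w : List ℕ) : sigW (a :: w) = sig a ++ sigW w := rfl

lemma sigW_append (u v : List ℕ) : sigW (u ++ v) = sigW u ++ sigW v := by
  simp [sigW]

lemma length_sigW (w : List ℕ) : (sigW w).length = 4 * w.length := by
  induction w with
  | nil => rfl
  | cons a w ih => simp [sigW_cons, sig, ih]; omega

lemma sig_reverse (a : ℕ) : (sig a).reverse = sig a := rfl

lemma sigW_reverse (w : List ℕ) : (sigW w).reverse = sigW w.reverse := by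
  induction w with
  | nil => rfl
  | cons a w ih => simp [sigW_cons, sigW_append, ih, sig_reverse, sigW_nil]

lemma sigW_palindrome {w : List ℕ} (h : w.Palindrome) : (sigW w).Palindrome := by
  rw [List.Palindrome.iff_reverse_eq] at h ⊢
  rw [sigW_reverse, h]

lemma sigW_flatten (l : List (List ℕ)) : sigW l.flatten = (l.map sigW).flatten := by
  induction l with
  | nil => rfl
  | cons x l ih => simp [sigW_append, ih]

lemma sig_length (a : ℕ) : (sig a).length = 4 := rfl

lemma sigW_inj : ∀ x y : List ℕ, (∀ a ∈ x, a < 2) → (∀ a ∈ y, a < 2) →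
    sigW x = sigW y → x = y := by
  intro x
  induction x with
  | nil =>
    intro y _ hy h
    cases y with
    | nil => rfl
    | cons b y => simp [sigW_cons, sigW_nil, sig] at h
  | cons a x ih =>
    intro y hx hy h
    cases y with
    | nil => simp [sigW_cons, sigW_nil, sig] at h
    | cons b y =>
      rw [sigW_cons, sigW_cons] at h
      obtain ⟨h1, h2⟩ := List.append_inj h (by simp [sig])
      have ha : a < 2 := hx a (by simp)
      have hb : b < 2 := hy b (by simp)
      have hab : a = b := by
        simp [sig] at h1
        omega
      subst hab
      rw [ih y (fun c hc => hx c (by simp [hc])) (fun c hc => hy c (by simp [hc])) h2]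

/-- Splitting lemma: any split of `sigW w` at a multiple of 4 comes from a
split of `w`. -/
lemma sigW_split : ∀ (m : ℕ) (w y r : List ℕ), y.length = 4 * m →
    y ++ r = sigW w → ∃ u v, w = u ++ v ∧ sigW u = y ∧ sigW v = r := by
  intro m
  induction m with
  | zero =>
    intro w y r hy h
    have : y = [] := List.eq_nil_of_length_eq_zero (by omega)
    subst this
    exact ⟨[], w, rfl, rfl, h.symm⟩
  | succ m ih =>
    intro w y r hy h
    cases w with
    | nil =>
      have := congrArg List.length h
      simp only [sigW_nil, List.length_append, List.length_nil, hy] at this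
      omega
    | cons a w =>
      rw [sigW_cons] at h
      have hy4 : (y.take 4).length = 4 := by
        rw [List.length_take]; omega
      have h' : y.take 4 ++ (y.drop 4 ++ r) = sig a ++ sigW w := by
        rw [← List.append_assoc, List.take_append_drop]; exact h
      obtain ⟨h1, h2⟩ := List.append_inj h' (by rw [hy4, sig_length])
      obtain ⟨u, v, huv, hu, hv⟩ := ih w (y.drop 4) r
        (by rw [List.length_drop]; omega) h2
      refine ⟨a :: u, v, by simp [huv], ?_, hv⟩
      rw [sigW_cons, hu, ← h1, List.take_append_drop]

/-- Any factorization of `sigW w` into pieces of length divisible by 4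
arises as the image of a factorization of `w`. -/
lemma unsig : ∀ (ys : List (List ℕ)) (w : List ℕ),
    (∀ y ∈ ys, y.length % 4 = 0) → ys.flatten = sigW w →
    ∃ xs : List (List ℕ), xs.flatten = w ∧ xs.length = ys.length ∧
      ∀ x ∈ xs, ∃ y ∈ ys, sigW x = y := by
  intro ys
  induction ys with
  | nil =>
    intro w _ h
    have hl := congrArg List.length h
    rw [length_sigW] at hl
    simp only [List.flatten_nil, List.length_nil] at hl
    have hw : w = [] := List.eq_nil_of_length_eq_zero (by omega)
    exact ⟨[], by simp [hw], rfl, by simp⟩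
  | cons y ys ih =>
    intro w h4 h
    rw [List.flatten_cons] at h
    have hy : y.length = 4 * (y.length / 4) := by
      have := h4 y (by simp)
      omega
    obtain ⟨u, v, huv, hu, hv⟩ := sigW_split (y.length / 4) w y ys.flatten hy h
    obtain ⟨xs, hx1, hx2, hx3⟩ := ih v (fun y hy => h4 y (by simp [hy])) hv.symm
    refine ⟨u :: xs, by simp [hx1, huv], by simp [hx2], ?_⟩
    intro x hx
    rcases List.mem_cons.mp hx with hx | hx
    · subst hx; exact ⟨y, by simp, hu⟩
    · obtain ⟨y', hy', hxy'⟩ := hx3 x hx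
      exact ⟨y', by simp [hy'], hxy'⟩

/-- The prefix of length `4n` of the Thue–Morse word is the image under the
morphism of the prefix of length `n`. -/
lemma prefix_four (n : ℕ) :
    (List.range (4 * n)).map tm = sigW ((List.range n).map tm) := by
  induction n with
  | zero => rfl
  | succ n ih =>
    have e0 : tm (4 * n) = tm n := by
      have : 4 * n = 2 * (2 * n) := by ring
      rw [this, tm_two_mul, tm_two_mul]
    have e1 : tm (4 * n + 1) = (tm n + 1) % 2 := by
      have : 4 * n + 1 = 2 * (2 * n) + 1 := by ring
      rw [this, tm_two_mul_add_one, tm_two_mul]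
    have e2 : tm (4 * n + 2) = (tm n + 1) % 2 := by
      have : 4 * n + 2 = 2 * (2 * n + 1) := by ring
      rw [this, tm_two_mul, tm_two_mul_add_one]
    have e3 : tm (4 * n + 3) = tm n := by
      have : 4 * n + 3 = 2 * (2 * n + 1) + 1 := by ring
      rw [this, tm_two_mul_add_one, tm_two_mul_add_one]
      have := tm_lt_two n
      omega
    have hm : tm n % 2 = tm n := Nat.mod_eq_of_lt (tm_lt_two n)
    have h4 : 4 * (n + 1) = 4 * n + 1 + 1 + 1 + 1 := by ring
    rw [h4, List.range_succ, List.range_succ, List.range_succ, List.range_succ,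
      List.range_succ (n := n)]
    simp only [List.map_append, sigW_append, ih, List.map_cons, List.map_nil,
      sigW_cons, sigW_nil, sig, hm]
    simp [e0, e1, e2, e3]

lemma flatten_singletons (l : List ℕ) : (l.map (fun a => [a])).flatten = l := by
  induction l with
  | nil => rfl
  | cons a l ih => simp [ih]

/-- The sets defining `pplTM0 (4n)` and `pplTM n` coincide. -/
lemma key_set_eq (n : ℕ) :
    {k | ∃ ps : List (List ℕ), ps.length = k ∧
      ps.flatten = (List.range (4 * n)).map tm ∧
      ∀ p ∈ ps, p ≠ [] ∧ p.Palindrome ∧ p.length % 4 = 0}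
    = {k | ∃ ps, ps.length = k ∧ IsPalDecomp ((List.range n).map tm) ps} := by
  ext k
  simp only [Set.mem_setOf_eq]
  constructor
  · rintro ⟨ps, rfl, hfl, hps⟩
    rw [prefix_four] at hfl
    obtain ⟨xs, hx1, hx2, hx3⟩ := unsig ps _ (fun y hy => (hps y hy).2.2) hfl
    refine ⟨xs, hx2, hx1, ?_⟩
    intro x hx
    obtain ⟨y, hy, hxy⟩ := hx3 x hx
    have hlt : ∀ a ∈ x, a < 2 := by
      intro a ha
      have : a ∈ xs.flatten := List.mem_flatten.mpr ⟨x, hx, ha⟩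
      rw [hx1] at this
      obtain ⟨kk, _, rfl⟩ := List.mem_map.mp this
      exact tm_lt_two kk
    constructor
    · intro hxe
      subst hxe
      exact (hps y hy).1 (hxy ▸ rfl)
    · have hyp : y.Palindrome := (hps y hy).2.1
      rw [List.Palindrome.iff_reverse_eq] at hyp ⊢
      have : sigW x.reverse = sigW x := by
        rw [← sigW_reverse, hxy]; exact hyp
      exact sigW_inj x.reverse x (fun a ha => hlt a (List.mem_reverse.mp ha)) hlt this
  · rintro ⟨ps, rfl, hfl, hps⟩
    refine ⟨ps.map sigW, by simp, ?_, ?_⟩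
    · rw [prefix_four, ← hfl, sigW_flatten]
    · intro p hp
      obtain ⟨q, hq, rfl⟩ := List.mem_map.mp hp
      obtain ⟨hq1, hq2⟩ := hps q hq
      refine ⟨?_, sigW_palindrome hq2, ?_⟩
      · intro h
        have := congrArg List.length h
        rw [length_sigW] at this
        simp at this
        exact hq1 this
      · rw [length_sigW]; omega

/-- For every `n ≥ 1`, the minimal size of a 0-decomposition of the prefix of
the Thue–Morse word of length `4n` equals `PPL_t(n)`; in particular
`PPL_t(4n) ≤ PPL_t(n)`. -/
theorem pplTM_zero_decomposition (n : ℕ) (hn : 1 ≤ n) :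
    pplTM0 (4 * n) = pplTM n ∧ pplTM (4 * n) ≤ pplTM n := by
  have heq : pplTM0 (4 * n) = pplTM n := by
    unfold pplTM0 pplTM palLen
    exact congrArg sInf (key_set_eq n)
  refine ⟨heq, ?_⟩
  -- the set for pplTM n (hence for pplTM0 (4n)) is nonempty:
  have hmem : n ∈ {k | ∃ ps, ps.length = k ∧
      IsPalDecomp ((List.range n).map tm) ps} := by
    refine ⟨((List.range n).map tm).map (fun a => [a]), by simp, flatten_singletons _, ?_⟩
    intro p hp
    obtain ⟨a, _, rfl⟩ := List.mem_map.mp hp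
    exact ⟨by simp, List.Palindrome.singleton a⟩
  have hne : {k | ∃ ps : List (List ℕ), ps.length = k ∧
      ps.flatten = (List.range (4 * n)).map tm ∧
      ∀ p ∈ ps, p ≠ [] ∧ p.Palindrome ∧ p.length % 4 = 0}.Nonempty :=
    ⟨n, (key_set_eq n).symm ▸ hmem⟩
  have h0 := Nat.sInf_mem hne
  obtain ⟨ps, hlen, hfl, hps⟩ := h0
  rw [← heq]
  unfold pplTM palLen
  exact Nat.sInf_le ⟨ps, hlen, hfl, fun p hp => ⟨(hps p hp).1, (hps p hp).2.1⟩⟩
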